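/- Let (X_1, X_2, X_3) have the following mixture law with c_2 = 6 + √3: with probability 1/c_2 for each j ∈ {1,2,3}, the vector is U e_j with U ~ Uniform(0,1]; with probability 1/c_2 for each pair 1 ≤ i < j ≤ 3, the vector is V (e_i + e_j) where V has density 2(1 − v) on (0,1]; and with probability √3/c_2, the vector is W (e_1 + e_2 + e_3) where W has distribution function G_2(z) = 1 − (1 − z)(1 − G_1(z)) on [0,1]. Then for every s ∈ (0,1), P(N_{s,3} = 1 | N_{s,3} ≥ 1) = 3/(√3 (1 − G_1(s)) + 3(1 − s) + 3), and hence lim_{s↑1} P(N_{s,3} = 1 | N_{s,3} ≥ 1) = 1; in particular FD_{3,1} exists and is degenerate at 1. -/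

import Mathlib

open MeasureTheory Filter Set Topology Classical

/-!
Each of the seven components of the mixture lives on a line `u ↦ u • e_J`, `J` a nonempty set of
coordinates, along which the number of exceedances of a level `s ≥ 0` is `|J|` for `u > s` and `0`
otherwise. So only the three axes contribute to `{N = 1}`, with mass `3(1-s)/c₂`, while `{N ≥ 1}`
also receives `3(1-s)²/c₂` from the pairs and `√3 (1-s)(1-G₁ s)/c₂` from the diagonal; dividing
by `(1-s)/c₂` gives the formula. For the limit, `G₁` is continuous with `G₁ 1 = 1`: on
`[1 - 2⁻ᵏ, 1 - 2⁻ᵏ⁻¹]` the density `g₁` is `2` on the first half and `0` on the second, so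
`G₁ (1 - 2⁻ᵏ) = 1 - 2⁻ᵏ` for every `k`.
-/

/-- Conditional probability `P(A | B)` as a real number. -/
noncomputable def condP {Ω : Type*} [MeasurableSpace Ω] (μ : Measure Ω) (A B : Set Ω) : ℝ :=
  (μ (A ∩ B)).toReal / (μ B).toReal

/-- The density `g₁` on `[0,1]`. -/
noncomputable def g1 (y : ℝ) : ℝ :=
  if ∃ k : ℕ, 1 - 1 / 2 ^ k ≤ y ∧ y ≤ 1 - 3 / 2 ^ (k + 2) then 2 else 0

/-- The distribution function of `g₁`. -/
noncomputable def G1 (y : ℝ) : ℝ := ∫ t in (0:ℝ)..y, g1 t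

/-- The distribution function `G₂(z) = 1 - (1-z)(1-G₁(z))` on `[0,1]`. -/
noncomputable def G2 (z : ℝ) : ℝ :=
  if z < 0 then 0 else if z ≤ 1 then 1 - (1 - z) * (1 - G1 z) else 1

/-- The uniform distribution on `(0,1]`. -/
noncomputable def unif : Measure ℝ := volume.restrict (Set.Ioc 0 1)

/-- The law with density `2(1-v)` on `(0,1]`. -/
noncomputable def nuV : Measure ℝ :=
  volume.withDensity fun v => ENNReal.ofReal (if v ∈ Set.Ioc (0:ℝ) 1 then 2 * (1 - v) else 0)

/-- The mixture law of `(X₁, X₂, X₃)` with `c₂ = 6 + √3`: the three axes carry the uniform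
law, the three diagonal pairs carry the law `nuV`, and the main diagonal carries the law `νW`
whose distribution function is `G₂`. -/
noncomputable def law3 (nuW : Measure ℝ) : Measure (ℝ × ℝ × ℝ) :=
  ENNReal.ofReal (1 / (6 + Real.sqrt 3)) •
    (Measure.map (fun u => (u, (0:ℝ), (0:ℝ))) unif +
     Measure.map (fun u => ((0:ℝ), u, (0:ℝ))) unif +
     Measure.map (fun u => ((0:ℝ), (0:ℝ), u)) unif) +
  ENNReal.ofReal (1 / (6 + Real.sqrt 3)) •
    (Measure.map (fun v => (v, v, (0:ℝ))) nuV +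
     Measure.map (fun v => ((0:ℝ), v, v)) nuV +
     Measure.map (fun v => (v, (0:ℝ), v)) nuV) +
  ENNReal.ofReal (Real.sqrt 3 / (6 + Real.sqrt 3)) •
    Measure.map (fun w => (w, w, w)) nuW

lemma g1_nonneg (y : ℝ) : 0 ≤ g1 y := by unfold g1; split <;> norm_num

lemma g1_le_two (y : ℝ) : g1 y ≤ 2 := by unfold g1; split <;> norm_num

lemma g1_eq_indicator :
    g1 = (⋃ k : ℕ, Icc (1 - 1 / 2 ^ k) (1 - 3 / 2 ^ (k + 2) : ℝ)).indicator fun _ => 2 := by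
  ext y
  simp only [g1, indicator, mem_iUnion, mem_Icc]

lemma intervalIntegrable_g1 (a b : ℝ) : IntervalIntegrable g1 volume a b := by
  have hmeas : Measurable g1 := g1_eq_indicator ▸
    measurable_const.indicator (.iUnion fun _ => measurableSet_Icc)
  refine (intervalIntegrable_const (c := (2 : ℝ))).mono_fun' hmeas.aestronglyMeasurable
    (.of_forall fun y => ?_)
  simpa only [Real.norm_of_nonneg (g1_nonneg y)] using g1_le_two y

lemma continuous_G1 : Continuous G1 :=
  intervalIntegral.continuous_primitive intervalIntegrable_g1 0

lemma G1_sub_G1 (a b : ℝ) : G1 b - G1 a = ∫ t in a..b, g1 t :=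
  intervalIntegral.integral_interval_sub_left (intervalIntegrable_g1 0 b)
    (intervalIntegrable_g1 0 a)

lemma monotone_G1 : Monotone G1 := fun a b hab => by
  have := G1_sub_G1 a b ▸ intervalIntegral.integral_nonneg hab fun y _ => g1_nonneg y
  linarith

lemma g1_eq_two {k : ℕ} {y : ℝ} (hy : y ∈ Icc (1 - 1 / 2 ^ k) (1 - 3 / 2 ^ (k + 2))) :
    g1 y = 2 :=
  if_pos ⟨k, hy⟩

lemma g1_eq_zero {k : ℕ} {y : ℝ} (hy : y ∈ Ioo (1 - 3 / 2 ^ (k + 2)) (1 - 1 / 2 ^ (k + 1))) :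
    g1 y = 0 := by
  refine if_neg ?_
  rintro ⟨j, hj, hj'⟩
  rcases le_or_gt j k with hjk | hkj
  · have : (3 : ℝ) / 2 ^ (k + 2) ≤ 3 / 2 ^ (j + 2) := by gcongr; norm_num
    linarith [hy.1]
  · have : (1 : ℝ) / 2 ^ j ≤ 1 / 2 ^ (k + 1) := by gcongr; norm_num; omega
    linarith [hy.2]

lemma G1_one_sub_inv_two_pow (k : ℕ) : G1 (1 - 1 / 2 ^ k) = 1 - 1 / 2 ^ k := by
  induction k with
  | zero => simp [G1]
  | succ k ih =>
    set a : ℝ := 1 - 1 / 2 ^ k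
    set m : ℝ := 1 - 3 / 2 ^ (k + 2)
    set b : ℝ := 1 - 1 / 2 ^ (k + 1)
    have hpow : (0 : ℝ) < 2 ^ k := by positivity
    have ham : a ≤ m := by simp only [a, m, pow_add]; field_simp; nlinarith
    have hmb : m ≤ b := by simp only [m, b, pow_add]; field_simp; nlinarith
    have h_am : ∫ t in a..m, g1 t = 2 * (m - a) := by
      rw [intervalIntegral.integral_congr (g := fun _ => 2) fun y hy => g1_eq_two
        (uIcc_of_le ham ▸ hy)]
      simp [mul_comm]
    have h_mb : ∫ t in m..b, g1 t = 0 := by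
      rw [intervalIntegral.integral_of_le hmb, integral_Ioc_eq_integral_Ioo]
      exact setIntegral_eq_zero_of_forall_eq_zero fun y hy => g1_eq_zero hy
    have := G1_sub_G1 a b
    rw [← intervalIntegral.integral_add_adjacent_intervals (intervalIntegrable_g1 a m)
      (intervalIntegrable_g1 m b), h_am, h_mb, ih] at this
    simp only [a, m, b, pow_add] at this ⊢
    field_simp at this ⊢
    linarith

lemma G1_one : G1 1 = 1 := by
  have hlim : Tendsto (fun k : ℕ => 1 - 1 / (2 : ℝ) ^ k) atTop (𝓝 1) := by
    simpa [one_div_pow] using (tendsto_pow_atTop_nhds_zero_of_lt_one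
      (by norm_num : (0 : ℝ) ≤ 1 / 2) (by norm_num)).const_sub 1
  refine tendsto_nhds_unique ?_ hlim
  simpa only [Function.comp_def, G1_one_sub_inv_two_pow] using (continuous_G1.tendsto 1).comp hlim

lemma G1_nonneg {s : ℝ} (hs : 0 ≤ s) : 0 ≤ G1 s := by
  simpa [G1] using monotone_G1 hs

lemma G1_le_one {s : ℝ} (hs : s ≤ 1) : G1 s ≤ 1 := G1_one ▸ monotone_G1 hs

lemma unif_Ioi {s : ℝ} (hs : 0 ≤ s) : unif (Ioi s) = ENNReal.ofReal (1 - s) := by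
  rw [unif, Measure.restrict_apply measurableSet_Ioi, inter_comm, Ioc_inter_Ioi,
    max_eq_right hs, Real.volume_Ioc]

lemma nuV_Ioi {s : ℝ} (hs : 0 ≤ s) (hs1 : s ≤ 1) : nuV (Ioi s) = ENNReal.ofReal ((1 - s) ^ 2) := by
  have hdens : (fun v : ℝ => ENNReal.ofReal (if v ∈ Ioc (0 : ℝ) 1 then 2 * (1 - v) else 0)) =
      (Ioc 0 1).indicator fun v => ENNReal.ofReal (2 * (1 - v)) := by
    ext v; split_ifs with hv <;> simp [hv]
  have hint : ∫ v in s..1, 2 * (1 - v) = (1 - s) ^ 2 := by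
    rw [intervalIntegral.integral_const_mul, intervalIntegral.integral_comp_sub_left fun v => v]
    simp only [sub_self, integral_id, ne_eq, OfNat.ofNat_ne_zero, not_false_eq_true, zero_pow,
      sub_zero]
    ring
  rw [nuV, withDensity_apply _ measurableSet_Ioi, hdens, lintegral_indicator measurableSet_Ioc,
    Measure.restrict_restrict measurableSet_Ioc, Ioc_inter_Ioi, max_eq_right hs,
    ← ofReal_integral_eq_lintegral_ofReal, ← intervalIntegral.integral_of_le hs1, hint]
  · exact (continuous_const.mul (continuous_const.sub continuous_id)).integrableOn_Ioc
  · filter_upwards [ae_restrict_mem measurableSet_Ioc] with v hv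
    simp only [Pi.zero_apply]
    nlinarith [hv.2]

lemma nuW_Ioi {nuW : Measure ℝ} [IsProbabilityMeasure nuW]
    (hW : ∀ z, nuW (Iic z) = ENNReal.ofReal (G2 z)) {s : ℝ} (hs : 0 ≤ s) (hs1 : s ≤ 1) :
    nuW (Ioi s) = ENNReal.ofReal ((1 - s) * (1 - G1 s)) := by
  have hG2 : G2 s = 1 - (1 - s) * (1 - G1 s) := by
    rw [G2, if_neg hs.not_gt, if_pos hs1]
  have hG2_nonneg : 0 ≤ G2 s := by
    rw [hG2]; nlinarith [G1_nonneg hs, G1_le_one hs1]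
  rw [← compl_Iic, prob_compl_eq_one_sub measurableSet_Iic, hW, ← ENNReal.ofReal_one,
    ← ENNReal.ofReal_sub _ hG2_nonneg, hG2, sub_sub_cancel]

noncomputable def exceedances (s : ℝ) (p : ℝ × ℝ × ℝ) : ℕ :=
  (if s < p.1 then 1 else 0) + (if s < p.2.1 then 1 else 0) + (if s < p.2.2 then 1 else 0)

lemma measurable_exceedances (s : ℝ) : Measurable (exceedances s) := by
  refine .add (.add ?_ ?_) ?_ <;>
    exact .ite (measurableSet_lt measurable_const (by fun_prop)) measurable_const measurable_const

lemma law3_apply (nuW : Measure ℝ) {E : Set (ℝ × ℝ × ℝ)} (hE : MeasurableSet E) :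
    law3 nuW E =
      ENNReal.ofReal (1 / (6 + Real.sqrt 3)) *
        (unif ((fun u => (u, (0:ℝ), (0:ℝ))) ⁻¹' E) +
         unif ((fun u => ((0:ℝ), u, (0:ℝ))) ⁻¹' E) +
         unif ((fun u => ((0:ℝ), (0:ℝ), u)) ⁻¹' E)) +
      ENNReal.ofReal (1 / (6 + Real.sqrt 3)) *
        (nuV ((fun v => (v, v, (0:ℝ))) ⁻¹' E) +
         nuV ((fun v => ((0:ℝ), v, v)) ⁻¹' E) +
         nuV ((fun v => (v, (0:ℝ), v)) ⁻¹' E)) +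
      ENNReal.ofReal (Real.sqrt 3 / (6 + Real.sqrt 3)) *
        nuW ((fun w => (w, w, w)) ⁻¹' E) := by
  simp only [law3, Measure.add_apply, Measure.smul_apply, smul_eq_mul]
  repeat rw [Measure.map_apply (by fun_prop) hE]

lemma preimage_setOf_exceedances_mem {s : ℝ} {γ : ℝ → ℝ × ℝ × ℝ} {m : ℕ}
    (hγ : ∀ u, exceedances s (γ u) = if s < u then m else 0) {S : Set ℕ} (hS : 0 ∉ S) :
    γ ⁻¹' {p | exceedances s p ∈ S} = if m ∈ S then Ioi s else ∅ := by
  ext u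
  rcases lt_or_ge s u with hu | hu <;> split_ifs <;> simp [hu.not_gt, *]

lemma law3_setOf_exceedances_mem (nuW : Measure ℝ) {s : ℝ} (hs : 0 ≤ s) {S : Set ℕ}
    (hS : 0 ∉ S) :
    law3 nuW {p | exceedances s p ∈ S} =
      ENNReal.ofReal (1 / (6 + Real.sqrt 3)) * (if 1 ∈ S then 3 * unif (Ioi s) else 0) +
      ENNReal.ofReal (1 / (6 + Real.sqrt 3)) * (if 2 ∈ S then 3 * nuV (Ioi s) else 0) +
      ENNReal.ofReal (Real.sqrt 3 / (6 + Real.sqrt 3)) * (if 3 ∈ S then nuW (Ioi s) else 0) := by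
  rw [law3_apply nuW (E := {p | exceedances s p ∈ S}) (measurable_exceedances s .of_discrete)]
  rw [preimage_setOf_exceedances_mem (m := 1) ?_ hS,
    preimage_setOf_exceedances_mem (m := 1) ?_ hS, preimage_setOf_exceedances_mem (m := 1) ?_ hS,
    preimage_setOf_exceedances_mem (m := 2) ?_ hS, preimage_setOf_exceedances_mem (m := 2) ?_ hS,
    preimage_setOf_exceedances_mem (m := 2) ?_ hS, preimage_setOf_exceedances_mem (m := 3) ?_ hS]
  · simp only [apply_ite, measure_empty]
    split_ifs <;> ring
  all_goals intro u; by_cases hu : s < u <;> simp [exceedances, hu, hs.not_gt]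

lemma condP_preimage {Ω α : Type*} [MeasurableSpace Ω] [MeasurableSpace α] (μ : Measure Ω)
    {T : Ω → α} (hT : Measurable T) {A B : Set α} (hA : MeasurableSet A) (hB : MeasurableSet B) :
    condP μ (T ⁻¹' A) (T ⁻¹' B) = condP (μ.map T) A B := by
  rw [condP, condP, Measure.map_apply hT (hA.inter hB), Measure.map_apply hT hB, preimage_inter]

lemma condP_law3_exceedances {nuW : Measure ℝ} [IsProbabilityMeasure nuW]
    (hW : ∀ z, nuW (Iic z) = ENNReal.ofReal (G2 z)) {s : ℝ} (hs : 0 ≤ s) (hs1 : s < 1) :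
    condP (law3 nuW) {p | exceedances s p = 1} {p | 1 ≤ exceedances s p} =
      3 / (Real.sqrt 3 * (1 - G1 s) + 3 * (1 - s) + 3) := by
  have hA := law3_setOf_exceedances_mem nuW hs (S := {1}) (by simp)
  have hB := law3_setOf_exceedances_mem nuW hs (S := Ici 1) (by simp)
  simp only [mem_singleton_iff, mem_Ici] at hA hB
  norm_num only [if_true, if_false, mul_zero, add_zero, unif_Ioi hs, nuV_Ioi hs hs1.le,
    nuW_Ioi hW hs hs1.le] at hA hB
  have hsub : {p | exceedances s p = 1} ⊆ {p | 1 ≤ exceedances s p} := fun _ hp => hp.ge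
  have h1s : 0 < 1 - s := by linarith
  have hG : 0 ≤ 1 - G1 s := sub_nonneg.2 (G1_le_one hs1.le)
  rw [condP, inter_eq_left.2 hsub, hA, hB, ENNReal.toReal_add (by finiteness) (by finiteness),
    ENNReal.toReal_add (by finiteness) (by finiteness)]
  have hc : 0 ≤ 1 / (6 + Real.sqrt 3) := by positivity
  have hc' : 0 ≤ Real.sqrt 3 / (6 + Real.sqrt 3) := by positivity
  simp only [ENNReal.toReal_mul, ENNReal.toReal_ofNat, ENNReal.toReal_ofReal hc,
    ENNReal.toReal_ofReal hc', ENNReal.toReal_ofReal h1s.le, ENNReal.toReal_ofReal (sq_nonneg _),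
    ENNReal.toReal_ofReal (mul_nonneg h1s.le hG)]
  field_simp
  ring

lemma tendsto_three_div_nhdsLT_one :
    Tendsto (fun s => 3 / (Real.sqrt 3 * (1 - G1 s) + 3 * (1 - s) + 3)) (𝓝[<] 1) (𝓝 1) := by
  have hden : Continuous fun s => Real.sqrt 3 * (1 - G1 s) + 3 * (1 - s) + 3 := by
    have := continuous_G1
    fun_prop
  have h : ContinuousAt (fun s => 3 / (Real.sqrt 3 * (1 - G1 s) + 3 * (1 - s) + 3)) 1 :=
    continuousAt_const.div hden.continuousAt (by norm_num [G1_one])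
  simpa [G1_one] using h.tendsto.mono_left nhdsWithin_le_nhds

theorem stmt4_general {Ω : Type*} [MeasurableSpace Ω] (μ : Measure Ω)
    (nuW : Measure ℝ) [IsProbabilityMeasure nuW]
    (hW : ∀ z, nuW (Set.Iic z) = ENNReal.ofReal (G2 z))
    (X1 X2 X3 : Ω → ℝ) (h1 : Measurable X1) (h2 : Measurable X2) (h3 : Measurable X3)
    (hlaw : Measure.map (fun ω => (X1 ω, X2 ω, X3 ω)) μ = law3 nuW)
    (N : ℝ → Ω → ℕ)
    (hN : ∀ s ω, N s ω = (if s < X1 ω then 1 else 0) + (if s < X2 ω then 1 else 0)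
      + (if s < X3 ω then 1 else 0)) :
    (∀ s ∈ Set.Ioo (0:ℝ) 1,
      condP μ {ω | N s ω = 1} {ω | 1 ≤ N s ω} =
        3 / (Real.sqrt 3 * (1 - G1 s) + 3 * (1 - s) + 3)) ∧
    Tendsto (fun s => condP μ {ω | N s ω = 1} {ω | 1 ≤ N s ω}) (𝓝[<] (1:ℝ)) (𝓝 1) := by
  obtain rfl : N = fun s ω => exceedances s (X1 ω, X2 ω, X3 ω) := funext₂ hN
  have key : ∀ s ∈ Ioo (0:ℝ) 1, condP μ {ω | exceedances s (X1 ω, X2 ω, X3 ω) = 1}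
      {ω | 1 ≤ exceedances s (X1 ω, X2 ω, X3 ω)} =
        3 / (Real.sqrt 3 * (1 - G1 s) + 3 * (1 - s) + 3) := by
    rintro s ⟨hs, hs1⟩
    rw [← condP_law3_exceedances hW hs.le hs1, ← hlaw]
    exact condP_preimage μ (h1.prodMk (h2.prodMk h3))
      (measurable_exceedances s (measurableSet_singleton 1))
      (measurable_exceedances s measurableSet_Ici)
  refine ⟨key, tendsto_three_div_nhdsLT_one.congr' ?_⟩
  filter_upwards [Ioo_mem_nhdsLT (show (0:ℝ) < 1 by norm_num)] with s hs using (key s hs).symm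

/-- Under the mixture law `law3 nuW`, where `nuW` has distribution function
`G₂`: for every `s ∈ (0,1)`,
`P(N_{s,3}=1 | N_{s,3}≥1) = 3/(√3(1-G₁(s)) + 3(1-s) + 3)`, and hence
`lim_{s↑1} P(N_{s,3}=1 | N_{s,3}≥1) = 1`, i.e. `FD_{3,1}` exists and is degenerate at 1. -/
theorem stmt4 {Ω : Type*} [MeasurableSpace Ω] (μ : Measure Ω) [IsProbabilityMeasure μ]
    (nuW : Measure ℝ) [IsProbabilityMeasure nuW]
    (hW : ∀ z, nuW (Set.Iic z) = ENNReal.ofReal (G2 z))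
    (X1 X2 X3 : Ω → ℝ) (h1 : Measurable X1) (h2 : Measurable X2) (h3 : Measurable X3)
    (hlaw : Measure.map (fun ω => (X1 ω, X2 ω, X3 ω)) μ = law3 nuW)
    (N : ℝ → Ω → ℕ)
    (hN : ∀ s ω, N s ω = (if s < X1 ω then 1 else 0) + (if s < X2 ω then 1 else 0)
      + (if s < X3 ω then 1 else 0)) :
    (∀ s ∈ Set.Ioo (0:ℝ) 1,
      condP μ {ω | N s ω = 1} {ω | 1 ≤ N s ω} =
        3 / (Real.sqrt 3 * (1 - G1 s) + 3 * (1 - s) + 3)) ∧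
    Tendsto (fun s => condP μ {ω | N s ω = 1} {ω | 1 ≤ N s ω}) (𝓝[<] (1:ℝ)) (𝓝 1) :=
  stmt4_general μ nuW hW X1 X2 X3 h1 h2 h3 hlaw N hN
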